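/- arXiv:2512.21321 — 2 statements merged into one kernel-verified Lean document; each statement's English description precedes it below -/
import Mathlib

section
/- Let p > 1, q ≥ 1, h ≥ 0 and a, b ∈ ℝ. Then there exists a constant C = C(p,q) > 0 such that (|b-a|^{p-2}(b-a))·((b-h)₊^q - (a-h)₊^q) ≥ C·|(b-h)₊^{(q-1+p)/p} - (a-h)₊^{(q-1+p)/p}|^p, where s₊ = max(s,0). -/
/-!
Let `a ≤ b`, `A = (a - h)₊ ≤ B = (b - h)₊` and `α = (q - 1 + p) / p ≥ 1`. Convexity of `x ↦ x ^ α`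
bounds `B ^ α - A ^ α` by the tangent slope at `B`, `α (B - A) B ^ (α - 1)`. Raising this to the
power `p` and using `(α - 1) p = q - 1` gives `α ^ p (B - A) ^ (p - 1) · (B - A) B ^ (q - 1)`, and
`(B - A) B ^ (q - 1) ≤ B ^ q - A ^ q` since `q ≥ 1`. Truncation is 1-Lipschitz, so
`B - A ≤ b - a`, and the inequality holds with `C = α ^ (-p)`; the case `b < a` is symmetric.
-/

open Real

theorem rpow_eq_rpow_sub_one_mul {x r : ℝ} (hx : 0 ≤ x) (hr : r ≠ 0) :
    x ^ r = x ^ (r - 1) * x := by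
  rw [← rpow_add_one' hx (by simpa using hr), sub_add_cancel]

theorem rpow_sub_rpow_le_mul_rpow_sub_one {A B α : ℝ} (hA : 0 ≤ A) (hAB : A ≤ B) (hα : 1 ≤ α) :
    B ^ α - A ^ α ≤ α * (B - A) * B ^ (α - 1) := by
  rcases hAB.eq_or_lt with rfl | hlt
  · simp
  have hslope := (convexOn_rpow hα).slope_le_of_hasDerivAt (Set.mem_Ici.2 hA)
    (Set.mem_Ici.2 (hA.trans hAB)) hlt (hasDerivAt_rpow_const (Or.inr hα))
  rw [slope_def_field, div_le_iff₀ (sub_pos.2 hlt)] at hslope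
  linarith

theorem sub_mul_rpow_sub_one_le_rpow_sub_rpow {A B q : ℝ} (hA : 0 ≤ A) (hAB : A ≤ B)
    (hq : 1 ≤ q) : (B - A) * B ^ (q - 1) ≤ B ^ q - A ^ q := by
  have hB : 0 ≤ B := hA.trans hAB
  have hq0 : q ≠ 0 := (zero_lt_one.trans_le hq).ne'
  have hmono : A ^ (q - 1) ≤ B ^ (q - 1) := rpow_le_rpow hA hAB (by linarith)
  calc (B - A) * B ^ (q - 1) = B ^ (q - 1) * B - B ^ (q - 1) * A := by ring
    _ ≤ B ^ (q - 1) * B - A ^ (q - 1) * A := by gcongr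
    _ = B ^ q - A ^ q := by
        rw [← rpow_eq_rpow_sub_one_mul hB hq0, ← rpow_eq_rpow_sub_one_mul hA hq0]

theorem rpow_sub_rpow_rpow_le {A B α p q : ℝ} (hA : 0 ≤ A) (hAB : A ≤ B) (hp : 0 < p)
    (hq : 1 ≤ q) (hα : (α - 1) * p = q - 1) :
    (B ^ α - A ^ α) ^ p ≤ α ^ p * (B - A) ^ (p - 1) * (B ^ q - A ^ q) := by
  have hB : 0 ≤ B := hA.trans hAB
  have hBA : 0 ≤ B - A := sub_nonneg.2 hAB
  have hα1 : 1 ≤ α := by nlinarith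
  have hα0 : 0 ≤ α := zero_le_one.trans hα1
  calc (B ^ α - A ^ α) ^ p
      ≤ (α * (B - A) * B ^ (α - 1)) ^ p :=
        rpow_le_rpow (sub_nonneg.2 (rpow_le_rpow hA hAB hα0))
          (rpow_sub_rpow_le_mul_rpow_sub_one hA hAB hα1) hp.le
    _ = α ^ p * (B - A) ^ (p - 1) * ((B - A) * B ^ (q - 1)) := by
        rw [mul_rpow (mul_nonneg hα0 hBA) (rpow_nonneg hB _), mul_rpow hα0 hBA,
          ← rpow_mul hB, hα, rpow_eq_rpow_sub_one_mul hBA hp.ne']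
        ring
    _ ≤ α ^ p * (B - A) ^ (p - 1) * (B ^ q - A ^ q) := by
        gcongr
        exact sub_mul_rpow_sub_one_le_rpow_sub_rpow hA hAB hq

theorem abs_rpow_sub_two_mul_self {t p : ℝ} (ht : 0 ≤ t) (hp : 1 < p) :
    |t| ^ (p - 2) * t = t ^ (p - 1) := by
  rw [abs_of_nonneg ht, rpow_eq_rpow_sub_one_mul ht (r := p - 1) (by linarith)]
  norm_num [sub_sub]

theorem max_sub_max_zero_rpow_le {a b h α p q : ℝ} (hab : a ≤ b) (hp : 1 < p) (hq : 1 ≤ q)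
    (hα : (α - 1) * p = q - 1) :
    |max (b - h) 0 ^ α - max (a - h) 0 ^ α| ^ p ≤
      α ^ p * (|b - a| ^ (p - 2) * (b - a) * (max (b - h) 0 ^ q - max (a - h) 0 ^ q)) := by
  set A := max (a - h) 0
  set B := max (b - h) 0
  have hA : 0 ≤ A := le_max_right _ _
  have hAB : A ≤ B := max_le_max_right 0 (by linarith)
  have hα0 : 0 ≤ α := by nlinarith
  have hBA : B - A ≤ b - a :=
    calc B - A ≤ |(b - h) - (a - h)| := (le_abs_self _).trans (abs_max_sub_max_le_abs _ _ _)
      _ = b - a := by rw [sub_sub_sub_cancel_right, abs_of_nonneg (sub_nonneg.2 hab)]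
  rw [abs_of_nonneg (sub_nonneg.2 (rpow_le_rpow hA hAB hα0)),
    abs_rpow_sub_two_mul_self (sub_nonneg.2 hab) hp, ← mul_assoc]
  calc (B ^ α - A ^ α) ^ p ≤ α ^ p * (B - A) ^ (p - 1) * (B ^ q - A ^ q) :=
        rpow_sub_rpow_rpow_le hA hAB (by linarith) hq hα
    _ ≤ α ^ p * (b - a) ^ (p - 1) * (B ^ q - A ^ q) := by
        gcongr
        exact sub_nonneg.2 (rpow_le_rpow hA hAB (by linarith))

theorem stmt_11 (p q : ℝ) (hp : 1 < p) (hq : 1 ≤ q) :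
    ∃ C > 0, ∀ h a b : ℝ, 0 ≤ h →
      C * |max (b - h) 0 ^ ((q - 1 + p) / p) - max (a - h) 0 ^ ((q - 1 + p) / p)| ^ p ≤
        |b - a| ^ (p - 2) * (b - a) * (max (b - h) 0 ^ q - max (a - h) 0 ^ q) := by
  set α := (q - 1 + p) / p
  have hα0 : 0 < α := div_pos (by linarith) (by linarith)
  have hα : (α - 1) * p = q - 1 := by
    simp only [α]
    field_simp
    ring
  refine ⟨(α ^ p)⁻¹, by positivity, fun h a b _ => ?_⟩
  rw [inv_mul_le_iff₀ (by positivity)]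
  wlog hab : a ≤ b generalizing a b
  · rw [abs_sub_comm, abs_sub_comm b a]
    convert this b a (le_of_not_ge hab) using 2
    ring
  exact max_sub_max_zero_rpow_le hab hp hq hα
end

section
/- Let N > p ≥ 2 and λ = N(p-2)+p. Suppose ρ : V → (0,∞) satisfies ρ(x) ≤ d(x)^{-α} for d(x) ≥ 1 with α > p, and the graph satisfies μ(B(R)) ≤ C₁R^N. Then for ν > (N-p)(p-2)/(α-p) - p + 1, the sum ∑_{x∈V} ρ(x)^{N(p-1+ν)/(λ+pν)} m(x) is finite. -/
/-!
Write `κ = p - 1 + ν` and `e = Nκ / (N(p-2) + p + pν)`. Since the denominator equals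
`pκ + (N-p)(p-2)`, the condition on `ν` is exactly `(α - p)κ > (N - p)(p - 2)`, i.e. `αe > N`.
Hence `ρ^e m ≤ d^{-β} m` with `β = αe > N`, and such a sum converges under volume growth of order `N`:
on the dyadic shell `2^k < d ≤ 2^(k+1)` it is at most `2^(-kβ) · C (2^(k+1))^N`, a geometric
sequence of ratio `2^(N-β) < 1`.
-/

open Finset Real

section VolumeGrowth

variable {V : Type*} [DecidableEq V] {d : V → ℕ} (hfin : ∀ R : ℕ, {x | d x ≤ R}.Finite)

theorem sum_ball_two_pow_le_add_sum_shell {f : V → ℝ} {g : ℕ → ℝ}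
    (hshell : ∀ k, ∑ x ∈ (hfin (2 ^ (k + 1))).toFinset \ (hfin (2 ^ k)).toFinset, f x ≤ g k)
    (k : ℕ) :
    ∑ x ∈ (hfin (2 ^ k)).toFinset, f x ≤ ∑ x ∈ (hfin 1).toFinset, f x + ∑ i ∈ range k, g i := by
  induction k with
  | zero => simp
  | succ k ih =>
    have hsub : (hfin (2 ^ k)).toFinset ⊆ (hfin (2 ^ (k + 1))).toFinset :=
      Set.Finite.toFinset_subset_toFinset.2 fun x hx =>
        le_trans hx (Nat.pow_le_pow_right two_pos k.le_succ)
    rw [← sum_sdiff hsub, sum_range_succ]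
    linarith [hshell k]

theorem sum_shell_two_pow_le {m f : V → ℝ} {N β C : ℝ} (hβ : 0 ≤ β) (hm : ∀ x, 0 ≤ m x)
    (hfd : ∀ x, 1 ≤ d x → f x ≤ (d x : ℝ) ^ (-β) * m x)
    (hvol : ∀ R : ℕ, 1 ≤ R → ∑ x ∈ (hfin R).toFinset, m x ≤ C * (R : ℝ) ^ N) (k : ℕ) :
    ∑ x ∈ (hfin (2 ^ (k + 1))).toFinset \ (hfin (2 ^ k)).toFinset, f x ≤
      C * 2 ^ N * ((2 : ℝ) ^ (N - β)) ^ k := by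
  set shell := (hfin (2 ^ (k + 1))).toFinset \ (hfin (2 ^ k)).toFinset
  have hpoint : ∀ x ∈ shell, f x ≤ ((2 : ℝ) ^ k) ^ (-β) * m x := by
    intro x hx
    simp only [shell, mem_sdiff, Set.Finite.mem_toFinset, Set.mem_ofPred_eq, not_le] at hx
    have hdx : (2 : ℝ) ^ k ≤ d x := by exact_mod_cast hx.2.le
    calc f x ≤ (d x : ℝ) ^ (-β) * m x := hfd x (Nat.one_le_two_pow.trans hx.2.le)
      _ ≤ ((2 : ℝ) ^ k) ^ (-β) * m x :=
        mul_le_mul_of_nonneg_right (rpow_le_rpow_of_nonpos (by positivity) hdx (by linarith))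
          (hm x)
  calc ∑ x ∈ shell, f x ≤ ∑ x ∈ shell, ((2 : ℝ) ^ k) ^ (-β) * m x := sum_le_sum hpoint
    _ = ((2 : ℝ) ^ k) ^ (-β) * ∑ x ∈ shell, m x := (mul_sum _ _ _).symm
    _ ≤ ((2 : ℝ) ^ k) ^ (-β) * (C * ((2 ^ (k + 1) : ℕ) : ℝ) ^ N) := by
      gcongr
      exact (sum_le_sum_of_subset_of_nonneg sdiff_subset fun x _ _ => hm x).trans
        (hvol _ Nat.one_le_two_pow)
    _ = C * 2 ^ N * ((2 : ℝ) ^ (N - β)) ^ k := by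
      push_cast
      rw [← rpow_pow_comm zero_le_two, ← rpow_pow_comm zero_le_two, sub_eq_add_neg,
        rpow_add two_pos, pow_succ, mul_pow]
      ring

theorem summable_of_le_rpow_neg_mul {m f : V → ℝ} {N β C : ℝ} (hN : 0 ≤ N) (hNβ : N < β)
    (hm : ∀ x, 0 ≤ m x) (hf : ∀ x, 0 ≤ f x)
    (hfd : ∀ x, 1 ≤ d x → f x ≤ (d x : ℝ) ^ (-β) * m x)
    (hvol : ∀ R : ℕ, 1 ≤ R → ∑ x ∈ (hfin R).toFinset, m x ≤ C * (R : ℝ) ^ N) :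
    Summable f := by
  set r : ℝ := 2 ^ (N - β)
  have hr0 : 0 ≤ r := rpow_nonneg zero_le_two _
  have hr1 : r < 1 := rpow_lt_one_of_one_lt_of_neg one_lt_two (by linarith)
  have hC : 0 ≤ C := by
    simpa using (sum_nonneg fun x _ => hm x).trans (hvol 1 le_rfl)
  have hball := sum_ball_two_pow_le_add_sum_shell hfin
    (sum_shell_two_pow_le hfin (hN.trans hNβ.le) hm hfd hvol)
  refine summable_of_sum_le hf
    (c := ∑ x ∈ (hfin 1).toFinset, f x + C * 2 ^ N * (1 - r)⁻¹) fun u => ?_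
  have hu : u ⊆ (hfin (2 ^ u.sup d)).toFinset := fun x hx => by
    simpa using (le_sup hx).trans (Nat.lt_two_pow_self).le
  have hgeom : ∑ i ∈ range (u.sup d), r ^ i ≤ (1 - r)⁻¹ :=
    sum_le_hasSum _ (fun i _ => pow_nonneg hr0 i) (hasSum_geometric_of_lt_one hr0 hr1)
  calc ∑ x ∈ u, f x ≤ ∑ x ∈ (hfin (2 ^ u.sup d)).toFinset, f x :=
        sum_le_sum_of_subset_of_nonneg hu fun x _ _ => hf x
    _ ≤ ∑ x ∈ (hfin 1).toFinset, f x + ∑ i ∈ range (u.sup d), C * 2 ^ N * r ^ i := hball _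
    _ ≤ ∑ x ∈ (hfin 1).toFinset, f x + C * 2 ^ N * (1 - r)⁻¹ := by
      rw [← mul_sum]
      gcongr

end VolumeGrowth

theorem sub_mul_sub_lt_of_div_sub_lt {N p α ν : ℝ} (hα : p < α)
    (hν : (N - p) * (p - 2) / (α - p) - p + 1 < ν) :
    (N - p) * (p - 2) < (α - p) * (p - 1 + ν) :=
  (div_lt_iff₀' (sub_pos.2 hα)).1 (by linarith)

theorem stmt_13_general {V : Type*} (N p α ν C₁ : ℝ) (hp : 2 ≤ p) (hpN : p < N) (hα : p < α)
    (hν : (N - p) * (p - 2) / (α - p) - p + 1 < ν)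
    (d : V → ℕ) (m ρ : V → ℝ) (hm : ∀ x, 0 < m x) (hρ : ∀ x, 0 < ρ x)
    (hρd : ∀ x, 1 ≤ d x → ρ x ≤ (d x : ℝ) ^ (-α))
    (hfin : ∀ R : ℕ, {x : V | d x ≤ R}.Finite)
    (hvol : ∀ R : ℕ, 1 ≤ R → ∑ x ∈ (hfin R).toFinset, m x ≤ C₁ * (R : ℝ) ^ N) :
    Summable (fun x : V => ρ x ^ (N * (p - 1 + ν) / (N * (p - 2) + p + p * ν)) * m x) := by
  classical
  set e := N * (p - 1 + ν) / (N * (p - 2) + p + p * ν)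
  have hgap := sub_mul_sub_lt_of_div_sub_lt hα hν
  have hNp : 0 ≤ (N - p) * (p - 2) := mul_nonneg (by linarith) (by linarith)
  have hκ : 0 < p - 1 + ν := pos_of_mul_pos_right (hNp.trans_lt hgap) (by linarith)
  have hden : N * (p - 2) + p + p * ν = p * (p - 1 + ν) + (N - p) * (p - 2) := by ring
  have hden0 : 0 < N * (p - 2) + p + p * ν := by rw [hden]; nlinarith
  have he : 0 < e := div_pos (by nlinarith) hden0
  have hαe : N < α * e := by
    rw [← mul_div_assoc, lt_div_iff₀ hden0, hden]
    nlinarith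
  refine summable_of_le_rpow_neg_mul hfin (by linarith) hαe (fun x => (hm x).le)
    (fun x => mul_nonneg (rpow_nonneg (hρ x).le _) (hm x).le) (fun x hx => ?_) hvol
  refine mul_le_mul_of_nonneg_right ?_ (hm x).le
  calc ρ x ^ e ≤ ((d x : ℝ) ^ (-α)) ^ e := rpow_le_rpow (hρ x).le (hρd x hx) he.le
    _ = (d x : ℝ) ^ (-(α * e)) := by rw [← rpow_mul (Nat.cast_nonneg _), neg_mul]

theorem stmt_13 {V : Type*} (N p α ν C₁ : ℝ) (hp : 2 ≤ p) (hpN : p < N) (hα : p < α)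
    (hν0 : 0 < ν) (hν : (N - p) * (p - 2) / (α - p) - p + 1 < ν)
    (d : V → ℕ) (m ρ : V → ℝ) (hm : ∀ x, 0 < m x) (hρ : ∀ x, 0 < ρ x)
    (hρd : ∀ x, 1 ≤ d x → ρ x ≤ (d x : ℝ) ^ (-α))
    (hfin : ∀ R : ℕ, {x : V | d x ≤ R}.Finite)
    (hvol : ∀ R : ℕ, 1 ≤ R → ∑ x ∈ (hfin R).toFinset, m x ≤ C₁ * (R : ℝ) ^ N) :
    Summable (fun x : V => ρ x ^ (N * (p - 1 + ν) / (N * (p - 2) + p + p * ν)) * m x) :=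
  stmt_13_general N p α ν C₁ hp hpN hα hν d m ρ hm hρ hρd hfin hvol
end
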